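/- Suppose there exist quaternary GCM pairs of sizes s_1×s_2, s_1×s_3, and t_1×t_2. Then there exists a quaternary GCM quad of size s_1t_1 × (s_2+s_3)t_2. -/

import Mathlib

open scoped BigOperators

/-- Aperiodic autocorrelation of a complex sequence (indexed by ℤ). -/
noncomputable def seqAutocorr (a : ℤ → ℂ) (δ : ℤ) : ℂ :=
  ∑ᶠ i : ℤ, a i * (starRingEnd ℂ) (a (i - δ))

/-- Weight of a sequence. -/
noncomputable def seqWeight (a : ℤ → ℂ) : ℝ :=
  ∑ᶠ i : ℤ, ‖a i‖ ^ 2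

/-- Index lies in `[0, L)`. -/
def seqInBox (L : ℕ) (i : ℤ) : Prop := 0 ≤ i ∧ i < (L : ℤ)

/-- A polyphase sequence of length `L`: zero outside `[0, L)` and all entries inside
are `N`-th roots of unity for some `N`. -/
def seqPolyphase (L : ℕ) (a : ℤ → ℂ) : Prop :=
  (∀ i, ¬ seqInBox L i → a i = 0) ∧
    ∃ N : ℕ, 0 < N ∧ ∀ i, seqInBox L i → a i ^ N = 1

/-- Aperiodic autocorrelation of a complex matrix (indexed by ℤ × ℤ). -/
noncomputable def matAutocorr (A : ℤ → ℤ → ℂ) (δ₁ δ₂ : ℤ) : ℂ :=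
  ∑ᶠ (i : ℤ) (j : ℤ), A i j * (starRingEnd ℂ) (A (i - δ₁) (j - δ₂))

/-- Weight of a matrix. -/
noncomputable def matWeight (A : ℤ → ℤ → ℂ) : ℝ :=
  ∑ᶠ (i : ℤ) (j : ℤ), ‖A i j‖ ^ 2

/-- Index pair lies in `[0, m) × [0, n)`. -/
def matInBox (m n : ℕ) (i j : ℤ) : Prop :=
  0 ≤ i ∧ i < (m : ℤ) ∧ 0 ≤ j ∧ j < (n : ℤ)

/-- A polyphase matrix of size `m × n`. -/
def matPolyphase (m n : ℕ) (A : ℤ → ℤ → ℂ) : Prop :=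
  (∀ i j, ¬ matInBox m n i j → A i j = 0) ∧
    ∃ N : ℕ, 0 < N ∧ ∀ i j, matInBox m n i j → A i j ^ N = 1

/-- A quaternary matrix of size `m × n`: entries in {1, −1, i, −i} inside the box,
zero outside. -/
def matQuaternary (m n : ℕ) (A : ℤ → ℤ → ℂ) : Prop :=
  (∀ i j, ¬ matInBox m n i j → A i j = 0) ∧
    ∀ i j, matInBox m n i j →
      A i j = 1 ∨ A i j = -1 ∨ A i j = Complex.I ∨ A i j = -Complex.I

/-- Existence of a quaternary GCM pair of size `m × n`. -/
def QuatGCMPair (m n : ℕ) : Prop :=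
  ∃ A B : ℤ → ℤ → ℂ, matQuaternary m n A ∧ matQuaternary m n B ∧
    ∀ δ₁ δ₂ : ℤ, matAutocorr A δ₁ δ₂ + matAutocorr B δ₁ δ₂ =
      if δ₁ = 0 ∧ δ₂ = 0 then ((matWeight A + matWeight B : ℝ) : ℂ) else 0

/-- Existence of a quaternary GCM quad of size `m × n`. -/
def QuatGCMQuad (m n : ℕ) : Prop :=
  ∃ A B C D : ℤ → ℤ → ℂ, matQuaternary m n A ∧ matQuaternary m n B ∧
    matQuaternary m n C ∧ matQuaternary m n D ∧
    ∀ δ₁ δ₂ : ℤ,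
      matAutocorr A δ₁ δ₂ + matAutocorr B δ₁ δ₂ + matAutocorr C δ₁ δ₂ +
          matAutocorr D δ₁ δ₂ =
        if δ₁ = 0 ∧ δ₂ = 0 then
          ((matWeight A + matWeight B + matWeight C + matWeight D : ℝ) : ℂ)
        else 0

/-!
Identify an array with its generating Laurent polynomial in `ℂ[ℤ × ℤ]`. With the involution
`x* (z) = conj (x (z⁻¹))`, the autocorrelation of `x` is the coefficient sequence of `x * x*`,
so a family is a Golay complementary set exactly when `∑ xₗ * xₗ*` is a constant.

Let `(a, b)`, `(c, d)`, `(e, f)` be the given pairs and `u = z₂ ^ s₂`, so that `a, u c` and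
`b, u d` are the halves of the horizontal concatenations `[A | C]`, `[B | D]`. Let
`X = e (z₁ ^ s₁, z₂ ^ (s₂ + s₃))`, `Y = f (z₁ ^ s₁, z₂ ^ (s₂ + s₃))`, and let `v` be the monomial
for which `v X*`, `v Y*` are the substituted reversed conjugates of `E`, `F`. Since `v v* = 1`,
the four arrays
  `a X + u c Y`, `b X + u d Y`, `a v Y* - u c v X*`, `b v Y* - u d v X*`
satisfy `∑ g g* = (a a* + b b* + c c* + d d*) (X X* + Y Y*)`, a product of constants.
Every entry of such an array is a single product of an entry of `[A | C]` or `[B | D]` (up to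
sign) with an entry of `E`, `F` or one of their reversed conjugates, hence a fourth root of unity.
-/

open AddMonoidAlgebra

namespace GolayArray

section Star

variable {k G : Type*} [Semiring k] [StarRing k] [AddGroup G]

noncomputable instance : Star k[G] where
  star x := ofCoeff ((x.coeff.equivMapDomain (Equiv.neg G)).mapRange star (star_zero k))

lemma coeff_star_apply (x : k[G]) (g : G) : (star x).coeff g = star (x.coeff (-g)) := by
  simp [star]

noncomputable instance : StarAddMonoid k[G] where
  star_involutive x := by ext; simp [coeff_star_apply]
  star_add x y := by ext; simp [coeff_star_apply]

lemma star_single (g : G) (r : k) : star (single g r) = single (-g) (star r) := by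
  classical
  ext h
  simp only [coeff_star_apply, coeff_single, Finsupp.single_apply, neg_eq_iff_eq_neg,
    eq_comm (a := g)]
  split_ifs <;> simp

noncomputable instance : StarRing k[G] where
  star_add := star_add
  star_mul x y := by
    induction x using AddMonoidAlgebra.induction_linear with
    | zero => simp
    | add x x' hx hx' => rw [add_mul, star_add, star_add, hx, hx', mul_add]
    | single a r =>
      induction y using AddMonoidAlgebra.induction_linear with
      | zero => simp
      | add y y' hy hy' => rw [mul_add, star_add, star_add, hy, hy', add_mul]
      | single b s => simp [single_mul_single, star_single]

lemma single_one_mul_star_self (g : G) : single g (1 : k) * star (single g 1) = 1 := by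
  rw [star_single, single_mul_single, add_neg_cancel, star_one, mul_one, one_def]

lemma mapDomainRingHom_star {H : Type*} [AddGroup H] (f : G →+ H) (x : k[G]) :
    mapDomainRingHom k f (star x) = star (mapDomainRingHom k f x) := by
  induction x using AddMonoidAlgebra.induction_linear with
  | zero => simp
  | add x y hx hy => simp only [star_add, map_add, hx, hy]
  | single a r => simp [star_single]

end Star

section Matrices

def toMat (x : ℂ[ℤ × ℤ]) : ℤ → ℤ → ℂ := fun i j => x.coeff (i, j)

noncomputable def box (m n : ℕ) : Finset (ℤ × ℤ) := Finset.Ico 0 (m : ℤ) ×ˢ Finset.Ico 0 (n : ℤ)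

lemma mem_box {m n : ℕ} {p : ℤ × ℤ} :
    p ∈ box m n ↔ 0 ≤ p.1 ∧ p.1 < m ∧ 0 ≤ p.2 ∧ p.2 < n := by
  simp [box, and_assoc]

lemma finsum_finsum_eq_sum {M : Type*} [AddCommMonoid M] (F : ℤ → ℤ → M) (s : Finset (ℤ × ℤ))
    (hF : ∀ i j, F i j ≠ 0 → (i, j) ∈ s) : ∑ᶠ (i) (j), F i j = ∑ p ∈ s, F p.1 p.2 := by
  have hsupp : Function.support (fun p : ℤ × ℤ => F p.1 p.2) ⊆ s := fun p hp => hF p.1 p.2 hp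
  rw [← finsum_curry (fun p : ℤ × ℤ => F p.1 p.2) ((s.finite_toSet).subset hsupp),
    finsum_eq_sum_of_support_subset _ hsupp]

lemma coeff_mul_star (x : ℂ[ℤ × ℤ]) (g : ℤ × ℤ) :
    (x * star x).coeff g = ∑ p ∈ x.coeff.support, x.coeff p * star (x.coeff (p - g)) := by
  simp [coeff_mul_apply_left, coeff_star_apply, Finsupp.sum, sub_eq_neg_add]

lemma matAutocorr_toMat (x : ℂ[ℤ × ℤ]) (δ₁ δ₂ : ℤ) :
    matAutocorr (toMat x) δ₁ δ₂ = (x * star x).coeff (δ₁, δ₂) := by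
  rw [matAutocorr, coeff_mul_star, finsum_finsum_eq_sum _ x.coeff.support]
  · rfl
  · intro i j h
    exact Finsupp.mem_support_iff.2 (left_ne_zero_of_mul h)

lemma matWeight_toMat (x : ℂ[ℤ × ℤ]) : (matWeight (toMat x) : ℂ) = (x * star x).coeff 0 := by
  rw [matWeight, coeff_mul_star, finsum_finsum_eq_sum _ x.coeff.support]
  · push_cast
    refine Finset.sum_congr rfl fun p _ => ?_
    simp [toMat, Complex.mul_conj, Complex.normSq_eq_norm_sq]
  · intro i j h
    exact Finsupp.mem_support_iff.2 fun h0 => h (by simp [toMat, h0])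

lemma eq_single_zero_iff (z : ℂ[ℤ × ℤ]) (w : ℂ) :
    z = single 0 w ↔ ∀ δ₁ δ₂ : ℤ, z.coeff (δ₁, δ₂) = if δ₁ = 0 ∧ δ₂ = 0 then w else 0 := by
  classical
  constructor
  · rintro rfl δ₁ δ₂
    simp [coeff_single, Finsupp.single_apply, Prod.ext_iff, eq_comm]
  · intro h
    ext ⟨δ₁, δ₂⟩
    simp [h, coeff_single, Finsupp.single_apply, Prod.ext_iff, eq_comm]

end Matrices

section Quaternary

open Complex

lemma quaternary_iff_pow_four (z : ℂ) : (z = 1 ∨ z = -1 ∨ z = I ∨ z = -I) ↔ z ^ 4 = 1 := by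
  constructor
  · rintro (rfl | rfl | rfl | rfl) <;> norm_num [pow_succ, I_mul_I]
  · intro h
    have hfactor : (z - 1) * (z + 1) * (z - I) * (z + I) = 0 := by
      linear_combination h + (1 - z ^ 2) * I_sq
    simp only [mul_eq_zero, sub_eq_zero, add_eq_zero_iff_eq_neg] at hfactor
    tauto

def IsQuaternary (m n : ℕ) (x : ℂ[ℤ × ℤ]) : Prop :=
  x.coeff.support ⊆ box m n ∧ ∀ p ∈ box m n, x.coeff p ^ 4 = 1

lemma IsQuaternary.coeff_eq_zero {m n : ℕ} {x : ℂ[ℤ × ℤ]} (hx : IsQuaternary m n x) {p : ℤ × ℤ}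
    (hp : p ∉ box m n) : x.coeff p = 0 :=
  Finsupp.notMem_support_iff.1 fun h => hp (hx.1 h)

lemma matQuaternary_toMat_iff {m n : ℕ} {x : ℂ[ℤ × ℤ]} :
    matQuaternary m n (toMat x) ↔ IsQuaternary m n x := by
  simp only [matQuaternary, matInBox, IsQuaternary, quaternary_iff_pow_four, Prod.forall,
    mem_box, toMat, Finset.subset_iff, Finsupp.mem_support_iff]
  exact and_congr_left' ⟨fun h i j => Not.imp_symm (h i j), fun h i j => Not.imp_symm (h i j)⟩

lemma exists_toMat_eq {m n : ℕ} {A : ℤ → ℤ → ℂ} (hA : ∀ i j, ¬ matInBox m n i j → A i j = 0) :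
    ∃ x : ℂ[ℤ × ℤ], toMat x = A :=
  ⟨ofCoeff (Finsupp.onFinset (box m n) (fun p => A p.1 p.2)
      fun p hp => mem_box.2 (Not.imp_symm (hA p.1 p.2) hp : matInBox m n p.1 p.2)), rfl⟩

lemma QuatGCMPair.exists_isQuaternary {m n : ℕ} (h : QuatGCMPair m n) :
    ∃ x y : ℂ[ℤ × ℤ], IsQuaternary m n x ∧ IsQuaternary m n y ∧
      ∃ w : ℂ, x * star x + y * star y = single 0 w := by
  obtain ⟨A, B, hA, hB, hAB⟩ := h
  obtain ⟨x, rfl⟩ := exists_toMat_eq hA.1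
  obtain ⟨y, rfl⟩ := exists_toMat_eq hB.1
  refine ⟨x, y, matQuaternary_toMat_iff.1 hA, matQuaternary_toMat_iff.1 hB,
    _, (eq_single_zero_iff _ (matWeight (toMat x) + matWeight (toMat y) : ℝ)).2 fun δ₁ δ₂ => ?_⟩
  simpa [matAutocorr_toMat] using hAB δ₁ δ₂

lemma quatGCMQuad_of_sum_mul_star {m n : ℕ} {x₁ x₂ x₃ x₄ : ℂ[ℤ × ℤ]}
    (h₁ : IsQuaternary m n x₁) (h₂ : IsQuaternary m n x₂) (h₃ : IsQuaternary m n x₃)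
    (h₄ : IsQuaternary m n x₄) {w : ℂ}
    (h : x₁ * star x₁ + x₂ * star x₂ + x₃ * star x₃ + x₄ * star x₄ = single 0 w) :
    QuatGCMQuad m n := by
  refine ⟨toMat x₁, toMat x₂, toMat x₃, toMat x₄, matQuaternary_toMat_iff.2 h₁,
    matQuaternary_toMat_iff.2 h₂, matQuaternary_toMat_iff.2 h₃, matQuaternary_toMat_iff.2 h₄,
    fun δ₁ δ₂ => ?_⟩
  have hweight : ((matWeight (toMat x₁) + matWeight (toMat x₂) + matWeight (toMat x₃) +
      matWeight (toMat x₄) : ℝ) : ℂ) = w := by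
    push_cast
    simp only [matWeight_toMat, ← coeff_add, ← Finsupp.add_apply, h]
    simp [coeff_single]
  simp only [matAutocorr_toMat, hweight, ← coeff_add, ← Finsupp.add_apply, h]
  exact (eq_single_zero_iff _ _).1 rfl δ₁ δ₂

end Quaternary

section Kronecker

noncomputable def expand (s m : ℕ) : ℂ[ℤ × ℤ] →+* ℂ[ℤ × ℤ] :=
  mapDomainRingHom ℂ ((AddMonoidHom.mulLeft (s : ℤ)).prodMap (AddMonoidHom.mulLeft (m : ℤ)))

variable {s m : ℕ}

lemma expand_single (g : ℤ × ℤ) (r : ℂ) :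
    expand s m (single g r) = single ((s : ℤ) * g.1, (m : ℤ) * g.2) r := by
  simp [expand]; rfl

lemma expand_star (x : ℂ[ℤ × ℤ]) : expand s m (star x) = star (expand s m x) :=
  mapDomainRingHom_star _ x

lemma coeff_expand_mul_mul (hs : s ≠ 0) (hm : m ≠ 0) (x : ℂ[ℤ × ℤ]) (a b : ℤ) :
    (expand s m x).coeff ((s : ℤ) * a, (m : ℤ) * b) = x.coeff (a, b) := by
  have hinj : Function.Injective
      ((AddMonoidHom.mulLeft (s : ℤ)).prodMap (AddMonoidHom.mulLeft (m : ℤ))) := by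
    rintro ⟨a, b⟩ ⟨a', b'⟩ h
    simp_all [Prod.ext_iff]
  exact Finsupp.mapDomain_apply hinj x.coeff (a, b)

lemma coeff_expand_of_forall_ne (x : ℂ[ℤ × ℤ]) {g : ℤ × ℤ}
    (hg : ∀ a b : ℤ, ((s : ℤ) * a, (m : ℤ) * b) ≠ g) : (expand s m x).coeff g = 0 := by
  refine Finsupp.mapDomain_of_notMem_range _ _ ?_
  rintro ⟨⟨a, b⟩, h⟩
  exact hg a b h

lemma emod_eq_of_eq_add_mul {i r s a : ℤ} (h0 : 0 ≤ r) (h1 : r < s) (h : i = r + s * a) :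
    i % s = r := by
  rw [h, Int.add_mul_emod_self_left, Int.emod_eq_of_lt h0 h1]

lemma mem_Ico_mul_iff (i : ℤ) (s u : ℕ) :
    i ∈ Finset.Ico 0 ((s * u : ℕ) : ℤ) ↔
      i % s ∈ Finset.Ico 0 (s : ℤ) ∧ i / s ∈ Finset.Ico 0 (u : ℤ) := by
  rcases Nat.eq_zero_or_pos s with rfl | hs
  · simp
  have hs' : (0 : ℤ) < s := by exact_mod_cast hs
  simp only [Finset.mem_Ico, Int.emod_nonneg i hs'.ne', Int.emod_lt_of_pos i hs', true_and,
    Int.ediv_nonneg_iff_of_pos hs', Int.ediv_lt_iff_lt_mul hs', Nat.cast_mul, mul_comm (u : ℤ)]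

lemma mem_box_mul_iff {u₁ u₂ : ℕ} {i j : ℤ} :
    (i, j) ∈ box (s * u₁) (m * u₂) ↔
      (i % s, j % m) ∈ box s m ∧ (i / s, j / m) ∈ box u₁ u₂ := by
  simp only [box, Finset.mem_product, mem_Ico_mul_iff]
  tauto

lemma coeff_mul_expand {p : ℂ[ℤ × ℤ]} (hp : p.coeff.support ⊆ box s m) (q : ℂ[ℤ × ℤ]) (i j : ℤ) :
    (p * expand s m q).coeff (i, j) = p.coeff (i % s, j % m) * q.coeff (i / s, j / m) := by
  have hunique : ∀ r ∈ box s m, ∀ a b : ℤ, ((s : ℤ) * a, (m : ℤ) * b) = -r + (i, j) →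
      r = (i % s, j % m) := by
    rintro ⟨r₁, r₂⟩ hr a b h
    obtain ⟨h1, h2, h3, h4⟩ := mem_box.1 hr
    simp only [Prod.ext_iff, Prod.fst_add, Prod.snd_add, Prod.fst_neg, Prod.snd_neg] at h
    ext
    · exact (emod_eq_of_eq_add_mul (a := a) h1 h2 (by linarith [h.1])).symm
    · exact (emod_eq_of_eq_add_mul (a := b) h3 h4 (by linarith [h.2])).symm
  rw [coeff_mul_apply_left, Finsupp.sum, Finset.sum_subset hp fun r _ hr => by
    rw [Finsupp.notMem_support_iff.1 hr, zero_mul]]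
  by_cases hr₀ : (i % s, j % m) ∈ box s m
  · obtain ⟨h₁, h₂, h₃, h₄⟩ := mem_box.1 hr₀
    have hs : s ≠ 0 := by rintro rfl; simp at h₁ h₂; omega
    have hm : m ≠ 0 := by rintro rfl; simp at h₃ h₄; omega
    rw [Finset.sum_eq_single_of_mem _ hr₀ fun r hr hne => by
      rw [coeff_expand_of_forall_ne q fun a b h => hne (hunique r hr a b h), mul_zero]]
    rw [← coeff_expand_mul_mul hs hm q]
    congr 2
    ext <;> simp [Int.emod_def]
  · rw [Finsupp.notMem_support_iff.1 fun h => hr₀ (hp h), zero_mul]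
    refine Finset.sum_eq_zero fun r hr => ?_
    rw [coeff_expand_of_forall_ne q fun a b h => hr₀ (hunique r hr a b h ▸ hr), mul_zero]

end Kronecker

section Construction

def IsQuaternaryTiling (s m : ℕ) (p p' : ℂ[ℤ × ℤ]) : Prop :=
  p.coeff.support ⊆ box s m ∧ p'.coeff.support ⊆ box s m ∧
    ∀ r ∈ box s m, (p.coeff r ^ 4 = 1 ∧ p'.coeff r = 0) ∨ (p.coeff r = 0 ∧ p'.coeff r ^ 4 = 1)

lemma IsQuaternaryTiling.neg_right {s m : ℕ} {p p' : ℂ[ℤ × ℤ]} (h : IsQuaternaryTiling s m p p') :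
    IsQuaternaryTiling s m p (-p') := by
  refine ⟨h.1, by simpa using h.2.1, fun r hr => ?_⟩
  simpa [coeff_neg, Even.neg_pow (by decide : Even 4)] using h.2.2 r hr

lemma IsQuaternaryTiling.isQuaternary_mul_expand_add {s m u₁ u₂ : ℕ} {p p' q q' : ℂ[ℤ × ℤ]}
    (h : IsQuaternaryTiling s m p p') (hq : IsQuaternary u₁ u₂ q)
    (hq' : IsQuaternary u₁ u₂ q') :
    IsQuaternary (s * u₁) (m * u₂) (p * expand s m q + p' * expand s m q') := by
  have hcoeff : ∀ i j : ℤ, (p * expand s m q + p' * expand s m q').coeff (i, j) =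
      p.coeff (i % s, j % m) * q.coeff (i / s, j / m) +
        p'.coeff (i % s, j % m) * q'.coeff (i / s, j / m) := fun i j => by
    rw [coeff_add, Finsupp.add_apply, coeff_mul_expand h.1, coeff_mul_expand h.2.1]
  refine ⟨fun ⟨i, j⟩ hij => ?_, fun ⟨i, j⟩ hij => ?_⟩
  · rw [mem_box_mul_iff]
    by_contra hout
    refine Finsupp.mem_support_iff.1 hij ?_
    rw [hcoeff]
    by_cases hr : (i % s, j % m) ∈ box s m
    · have hk : (i / s, j / m) ∉ box u₁ u₂ := fun hk => hout ⟨hr, hk⟩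
      rw [hq.coeff_eq_zero hk, hq'.coeff_eq_zero hk]
      ring
    · rw [Finsupp.notMem_support_iff.1 fun h' => hr (h.1 h'),
        Finsupp.notMem_support_iff.1 fun h' => hr (h.2.1 h')]
      ring
  · obtain ⟨hr, hk⟩ := mem_box_mul_iff.1 hij
    rw [hcoeff]
    rcases h.2.2 _ hr with ⟨h₁, h₂⟩ | ⟨h₁, h₂⟩
    · simp [h₂, mul_pow, h₁, hq.2 _ hk]
    · simp [h₁, mul_pow, h₂, hq'.2 _ hk]

lemma isQuaternaryTiling_concat {s₁ s₂ s₃ : ℕ} {a c : ℂ[ℤ × ℤ]} (ha : IsQuaternary s₁ s₂ a)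
    (hc : IsQuaternary s₁ s₃ c) :
    IsQuaternaryTiling s₁ (s₂ + s₃) a (single (0, (s₂ : ℤ)) 1 * c) := by
  have hshift : ∀ r : ℤ × ℤ, (single (0, (s₂ : ℤ)) 1 * c).coeff r = c.coeff (r.1, r.2 - s₂) :=
    fun r => by
      rw [coeff_single_mul_apply, one_mul]
      congr 1
      ext <;> simp [neg_add_eq_sub]
  refine ⟨fun r hr => ?_, fun r hr => ?_, fun r hr => ?_⟩
  · have := mem_box.1 (ha.1 hr)
    exact mem_box.2 (by push_cast; omega)
  · rw [Finsupp.mem_support_iff, hshift] at hr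
    have := mem_box.1 (hc.1 (Finsupp.mem_support_iff.2 hr))
    exact mem_box.2 (by push_cast at this ⊢; omega)
  · have hbox := mem_box.1 hr
    push_cast at hbox
    rw [hshift]
    by_cases hr₂ : r.2 < s₂
    · exact .inl ⟨ha.2 r (mem_box.2 (by omega)), hc.coeff_eq_zero fun h => by
        have := mem_box.1 h; omega⟩
    · exact .inr ⟨ha.coeff_eq_zero fun h => by have := mem_box.1 h; omega,
        hc.2 _ (mem_box.2 (by simp only; omega))⟩

lemma IsQuaternary.reverse {t₁ t₂ : ℕ} {e : ℂ[ℤ × ℤ]} (he : IsQuaternary t₁ t₂ e) :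
    IsQuaternary t₁ t₂ (single ((t₁ : ℤ) - 1, (t₂ : ℤ) - 1) 1 * star e) := by
  have hrev : ∀ r : ℤ × ℤ, (single ((t₁ : ℤ) - 1, (t₂ : ℤ) - 1) 1 * star e).coeff r =
      star (e.coeff ((t₁ : ℤ) - 1 - r.1, (t₂ : ℤ) - 1 - r.2)) := fun r => by
    rw [coeff_single_mul_apply, one_mul, coeff_star_apply, neg_add, neg_neg, ← sub_eq_add_neg]
    rfl
  refine ⟨fun r hr => ?_, fun r hr => ?_⟩
  · rw [Finsupp.mem_support_iff, hrev, star_ne_zero] at hr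
    have := mem_box.1 (he.1 (Finsupp.mem_support_iff.2 hr))
    exact mem_box.2 (by simp only at this; omega)
  · have := mem_box.1 hr
    rw [hrev, ← star_pow, he.2 _ (mem_box.2 (by simp only; omega)), star_one]

lemma sum_mul_star_golay_quad {S : Type*} [CommRing S] [StarRing S] (a b c d X Y v : S)
    (hv : v * star v = 1) :
    (a * X + c * Y) * star (a * X + c * Y) + (b * X + d * Y) * star (b * X + d * Y) +
        (a * (v * star Y) - c * (v * star X)) * star (a * (v * star Y) - c * (v * star X)) +
        (b * (v * star Y) - d * (v * star X)) * star (b * (v * star Y) - d * (v * star X)) =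
      (a * star a + b * star b + c * star c + d * star d) * (X * star X + Y * star Y) := by
  simp only [star_add, star_sub, star_mul, star_star]
  linear_combination ((a * star Y - c * star X) * (star a * Y - star c * X) +
    (b * star Y - d * star X) * (star b * Y - star d * X)) * hv

end Construction

end GolayArray

open GolayArray in
/-- if quaternary GCM pairs of sizes s₁×s₂, s₁×s₃ and t₁×t₂ exist, then a
quaternary GCM quad of size s₁t₁ × (s₂+s₃)t₂ exists. -/
theorem stmt19 (s₁ s₂ s₃ t₁ t₂ : ℕ)
    (h1 : QuatGCMPair s₁ s₂) (h2 : QuatGCMPair s₁ s₃) (h3 : QuatGCMPair t₁ t₂) :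
    QuatGCMQuad (s₁ * t₁) ((s₂ + s₃) * t₂) := by
  obtain ⟨a, b, ha, hb, w₁, hab⟩ := h1.exists_isQuaternary
  obtain ⟨c, d, hc, hd, w₂, hcd⟩ := h2.exists_isQuaternary
  obtain ⟨e, f, he, hf, w₃, hef⟩ := h3.exists_isQuaternary
  set κ := expand s₁ (s₂ + s₃)
  set u : ℂ[ℤ × ℤ] := single (0, (s₂ : ℤ)) 1
  set ρ : ℂ[ℤ × ℤ] := single ((t₁ : ℤ) - 1, (t₂ : ℤ) - 1) 1
  have hAC := isQuaternaryTiling_concat ha hc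
  have hBD := isQuaternaryTiling_concat hb hd
  refine quatGCMQuad_of_sum_mul_star (w := (w₁ + w₂) * w₃)
    (hAC.isQuaternary_mul_expand_add he hf) (hBD.isQuaternary_mul_expand_add he hf)
    (hAC.neg_right.isQuaternary_mul_expand_add hf.reverse he.reverse)
    (hBD.neg_right.isQuaternary_mul_expand_add hf.reverse he.reverse) ?_
  have hu : u * star u = 1 := single_one_mul_star_self _
  have hcd' : u * c * star (u * c) + u * d * star (u * d) = single 0 w₂ := by
    simp only [star_mul]
    linear_combination (c * star c + d * star d) * hu + hcd
  have hef' : κ e * star (κ e) + κ f * star (κ f) = single 0 w₃ := by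
    rw [← expand_star, ← expand_star, ← map_mul, ← map_mul, ← map_add, hef, expand_single]
    simp only [Prod.fst_zero, Prod.snd_zero, mul_zero, Prod.mk_zero_zero]
  have hρ : κ ρ * star (κ ρ) = 1 := by
    rw [expand_single]; exact single_one_mul_star_self _
  simp only [map_mul, expand_star, neg_mul, ← sub_eq_add_neg]
  rw [sum_mul_star_golay_quad _ _ _ _ _ _ _ hρ, add_assoc (_ + _), hcd', hab, hef',
    ← single_add, single_mul_single, add_zero]
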